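/- For the 4×4 matrix A = [[u,0,0,0],[v,u,0,0],[w,2v,u,0],[z,3w,3v,u]] with v ≠ 0, one has (A − u·I)^3 ≠ 0 and (A − u·I)^4 = 0; hence the Jordan canonical form of A consists of a single Jordan block of size 4 with eigenvalue u. -/

import Mathlib

/-!
Write `A = u • 1 + N` with `N` strictly lower triangular. A direct computation gives
`N ^ 3 = 6 v³ E₃₀` and `N ^ 4 = 0`, so for `x = e₀` the Jordan chain `N³x, N²x, Nx, x` consists
of linearly independent vectors: applying `N³, N², N` to a vanishing combination kills the
coefficients one at a time, since `N³x ≠ 0`. In this basis `N` is the shift, so `A` is the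
single Jordan block of size 4 with eigenvalue `u`.
-/

open Matrix

section JordanChain

variable {R : Type*} [CommRing R]

def jordanChainMatrix (N : Matrix (Fin 4) (Fin 4) R) (x : Fin 4 → R) : Matrix (Fin 4) (Fin 4) R :=
  Matrix.of fun i j => ![N ^ 3 *ᵥ x, N ^ 2 *ᵥ x, N *ᵥ x, x] j i

theorem jordanChainMatrix_mulVec (N : Matrix (Fin 4) (Fin 4) R) (x c : Fin 4 → R) :
    jordanChainMatrix N x *ᵥ c =
      c 0 • N ^ 3 *ᵥ x + c 1 • N ^ 2 *ᵥ x + c 2 • N *ᵥ x + c 3 • x := by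
  ext i
  simp only [mulVec, dotProduct, jordanChainMatrix, Fin.sum_univ_four, of_apply, cons_val',
    cons_val_fin_one, cons_val_zero, cons_val_one, cons_val, Pi.add_apply, Pi.smul_apply,
    smul_eq_mul]
  ring

theorem pow_mulVec_eq_zero_of_le {n : Type*} [Fintype n] [DecidableEq n] {N : Matrix n n R}
    {x : n → R} {m : ℕ} (hm : N ^ m *ᵥ x = 0) {k : ℕ} (hk : m ≤ k) : N ^ k *ᵥ x = 0 := by
  obtain ⟨j, rfl⟩ := Nat.exists_eq_add_of_le' hk
  rw [pow_add, ← mulVec_mulVec, hm, mulVec_zero]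

theorem mul_jordanChainMatrix {N : Matrix (Fin 4) (Fin 4) R} {x : Fin 4 → R}
    (h4 : N ^ 4 *ᵥ x = 0) (u : R) :
    (u • 1 + N) * jordanChainMatrix N x =
      jordanChainMatrix N x * !![u, 1, 0, 0; 0, u, 1, 0; 0, 0, u, 1; 0, 0, 0, u] := by
  have step (k : ℕ) : N *ᵥ (N ^ k *ᵥ x) = N ^ (k + 1) *ᵥ x := by
    rw [mulVec_mulVec, pow_succ']
  have shift (y : Fin 4 → R) : (u • 1 + N) *ᵥ y = u • y + N *ᵥ y := by
    rw [add_mulVec, smul_mulVec, one_mulVec]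
  ext i j
  change ((u • 1 + N) *ᵥ fun k => jordanChainMatrix N x k j) i = _
  fin_cases j <;>
    simp [jordanChainMatrix, shift, step, h4, ← sq, mul_apply, Fin.sum_univ_four] <;> ring

section Field

variable {K : Type*} [Field K] {N : Matrix (Fin 4) (Fin 4) K} {x : Fin 4 → K}

theorem isUnit_det_jordanChainMatrix (h4 : N ^ 4 *ᵥ x = 0) (h3 : N ^ 3 *ᵥ x ≠ 0) :
    IsUnit (jordanChainMatrix N x).det := by
  rw [isUnit_iff_ne_zero, Ne, ← exists_mulVec_eq_zero_iff]
  rintro ⟨c, hc, hPc⟩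
  rw [jordanChainMatrix_mulVec] at hPc
  have hN (m : ℕ) := congrArg (N ^ m *ᵥ ·) hPc
  have hz (k : ℕ) (hk : 4 ≤ k) : N ^ k *ᵥ x = 0 := pow_mulVec_eq_zero_of_le h4 hk
  simp only [mulVec_add, mulVec_smul, mulVec_mulVec, ← pow_add, ← pow_succ, mulVec_zero] at hN
  have hc3 : c 3 = 0 := by simpa [hz, h3] using hN 3
  have hc2 : c 2 = 0 := by simpa [hz, hc3, h3] using hN 2
  have hc1 : c 1 = 0 := by simpa [hz, hc3, hc2, h3] using hN 1
  have hc0 : c 0 = 0 := by simpa [hc3, hc2, hc1, h3] using hN 0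
  exact hc (by ext i; fin_cases i <;> assumption)

theorem jordanChainMatrix_inv_mul_mul (h4 : N ^ 4 *ᵥ x = 0) (h3 : N ^ 3 *ᵥ x ≠ 0) (u : K) :
    (jordanChainMatrix N x)⁻¹ * (u • 1 + N) * jordanChainMatrix N x =
      !![u, 1, 0, 0; 0, u, 1, 0; 0, 0, u, 1; 0, 0, 0, u] := by
  rw [mul_assoc, mul_jordanChainMatrix h4, ← mul_assoc,
    nonsing_inv_mul _ (isUnit_det_jordanChainMatrix h4 h3), one_mul]

end Field

end JordanChain

section Burgers

variable {R : Type*} [CommRing R]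

def burgersNilpotentPart (v w z : R) : Matrix (Fin 4) (Fin 4) R :=
  !![0, 0, 0, 0; v, 0, 0, 0; w, 2 * v, 0, 0; z, 3 * w, 3 * v, 0]

theorem burgersNilpotentPart_pow_three (v w z : R) :
    burgersNilpotentPart v w z ^ 3 =
      !![0, 0, 0, 0; 0, 0, 0, 0; 0, 0, 0, 0; 6 * v ^ 3, 0, 0, 0] := by
  ext i j
  fin_cases i <;> fin_cases j <;>
    simp [burgersNilpotentPart, pow_succ, mul_apply, Fin.sum_univ_four]
  ring

theorem burgersNilpotentPart_pow_four (v w z : R) : burgersNilpotentPart v w z ^ 4 = 0 := by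
  ext i j
  rw [pow_succ, burgersNilpotentPart_pow_three]
  fin_cases i <;> fin_cases j <;> simp [burgersNilpotentPart, mul_apply, Fin.sum_univ_four]

end Burgers

theorem stmt_12 (u v w z : ℝ) (hv : v ≠ 0) (A : Matrix (Fin 4) (Fin 4) ℝ)
    (hA : A = !![u, 0, 0, 0; v, u, 0, 0; w, 2*v, u, 0; z, 3*w, 3*v, u]) :
    (A - u • (1 : Matrix (Fin 4) (Fin 4) ℝ))^3 ≠ 0 ∧
    (A - u • (1 : Matrix (Fin 4) (Fin 4) ℝ))^4 = 0 ∧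
    ∃ P : Matrix (Fin 4) (Fin 4) ℝ, IsUnit P.det ∧
      P⁻¹ * A * P = !![u, 1, 0, 0; 0, u, 1, 0; 0, 0, u, 1; 0, 0, 0, u] := by
  set N := burgersNilpotentPart v w z
  have hN : A - u • 1 = N := by
    subst hA
    ext i j
    fin_cases i <;> fin_cases j <;> simp [N, burgersNilpotentPart]
  have h4 : N ^ 4 = 0 := burgersNilpotentPart_pow_four v w z
  have h4x : N ^ 4 *ᵥ Pi.single 0 1 = 0 := by rw [h4, zero_mulVec]
  have h3x : N ^ 3 *ᵥ Pi.single 0 1 ≠ 0 := fun h => by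
    simpa [N, burgersNilpotentPart_pow_three, hv] using congrFun h 3
  refine ⟨fun h => h3x (by rw [← hN, h, zero_mulVec]), by rw [hN, h4],
    jordanChainMatrix N (Pi.single 0 1), isUnit_det_jordanChainMatrix h4x h3x, ?_⟩
  rw [← sub_add_cancel A (u • 1), hN, add_comm]
  exact jordanChainMatrix_inv_mul_mul h4x h3x u
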